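/- arXiv:2405.01902 — 3 statements merged into one kernel-verified Lean document; each statement's English description precedes it below -/
import Mathlib

section
/- Let (ξ_i)_{i∈ℤ} be an independent sequence of random variables and (ξ'_i)_{i∈ℤ} an independent copy of it. For I, J ⊂ ℤ write ℱ_I = σ(ξ_i, i∈I) and ℱ'_J = σ(ξ'_j, j∈J). Then for every integrable random variable Y and all subsets I₁, I₂, J₁, J₂ of ℤ, E[ E[Y | ℱ_{I₁} ∨ ℱ'_{J₁}] | ℱ_{I₂} ∨ ℱ'_{J₂} ] = E[Y | ℱ_{I₁∩I₂} ∨ ℱ'_{J₁∩J₂}] almost surely. -/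
/-!
Index both families by `ℤ ⊕ ℤ`, so that `ℱ_I ∨ ℱ'_J = ⨆ k ∈ K, m k` with `K = inl '' I ∪ inr '' J`
and the `m k` independent. Write `K₂ = (K₁ ∩ K₂) ∪ (K₂ \ K₁)`. The function `Z = E[Y | ⨆ K₁]` is
measurable for `⨆ K₁`, which is independent of `⨆ (K₂ \ K₁)`, and adjoining to `⨆ (K₁ ∩ K₂) ≤ ⨆ K₁`
a σ-algebra independent of `⨆ K₁` does not change the conditional expectation of `Z` (compare set
integrals on the π-system of intersections `A ∩ B`). Hence
`E[Z | ⨆ K₂] = E[Z | ⨆ (K₁ ∩ K₂)] = E[Y | ⨆ (K₁ ∩ K₂)]` by the tower property.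
-/

open MeasureTheory ProbabilityTheory

theorem IsPiSystem.image2_inter {α : Type*} {C D : Set (Set α)} (hC : IsPiSystem C)
    (hD : IsPiSystem D) : IsPiSystem (Set.image2 (· ∩ ·) C D) := by
  rintro _ ⟨s₁, hs₁, t₁, ht₁, rfl⟩ _ ⟨s₂, hs₂, t₂, ht₂, rfl⟩ hne
  rw [Set.inter_inter_inter_comm] at hne ⊢
  exact ⟨s₁ ∩ s₂, hC _ hs₁ _ hs₂ hne.left, t₁ ∩ t₂, hD _ ht₁ _ ht₂ hne.right, rfl⟩

theorem MeasurableSpace.sup_eq_generateFrom_image2_inter {α : Type*}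
    (m₁ m₂ : MeasurableSpace α) :
    m₁ ⊔ m₂ =
      generateFrom (Set.image2 (· ∩ ·) {s | MeasurableSet[m₁] s} {t | MeasurableSet[m₂] t}) := by
  refine le_antisymm (sup_le ?_ ?_) (generateFrom_le ?_)
  · exact fun s hs ↦ measurableSet_generateFrom ⟨s, hs, Set.univ, .univ, Set.inter_univ s⟩
  · exact fun t ht ↦ measurableSet_generateFrom ⟨Set.univ, .univ, t, ht, Set.univ_inter t⟩
  · rintro _ ⟨s, hs, t, ht, rfl⟩
    exact (le_sup_left (b := m₂) _ hs).inter (le_sup_right (a := m₁) _ ht)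

theorem setIntegral_eq_of_isPiSystem {α E : Type*} [NormedAddCommGroup E] [NormedSpace ℝ E]
    {m m₀ : MeasurableSpace α} {μ : Measure α} (hm : m ≤ m₀) {C : Set (Set α)}
    (hgen : m = MeasurableSpace.generateFrom C) (hC : IsPiSystem C) {f g : α → E}
    (hf : Integrable f μ) (hg : Integrable g μ) (hfg : ∫ x, f x ∂μ = ∫ x, g x ∂μ)
    (hfgC : ∀ s ∈ C, ∫ x in s, f x ∂μ = ∫ x in s, g x ∂μ) {s : Set α}
    (hs : MeasurableSet[m] s) :
    ∫ x in s, f x ∂μ = ∫ x in s, g x ∂μ := by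
  induction s, hs using MeasurableSpace.induction_on_inter hgen hC with
  | empty => simp
  | basic t ht => exact hfgC t ht
  | compl t ht ih =>
    rw [setIntegral_compl (hm _ ht) hf, setIntegral_compl (hm _ ht) hg, hfg, ih]
  | iUnion t hdisj ht ih =>
    rw [integral_iUnion (fun i ↦ hm _ (ht i)) hdisj hf.integrableOn,
      integral_iUnion (fun i ↦ hm _ (ht i)) hdisj hg.integrableOn, tsum_congr ih]

theorem setIntegral_inter_eq_smul_of_indep {Ω E : Type*} [NormedAddCommGroup E] [NormedSpace ℝ E]
    {m₁ m₂ mΩ : MeasurableSpace Ω} {μ : Measure Ω} (hm₁ : m₁ ≤ mΩ) (hm₂ : m₂ ≤ mΩ)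
    (hindep : Indep m₁ m₂ μ) {h : Ω → E} (hh : StronglyMeasurable[m₁] h) {A B : Set Ω}
    (hA : MeasurableSet[m₁] A) (hB : MeasurableSet[m₂] B) :
    ∫ x in A ∩ B, h x ∂μ = μ.real B • ∫ x in A, h x ∂μ := by
  have key : ∫ x in B, A.indicator h (id x) ∂μ = μ.real B • ∫ x, A.indicator h (id x) ∂μ :=
    Indep.setIntegral_eq_smul (m𝓧 := m₁) hm₂
      (by simpa only [MeasurableSpace.comap_id] using hindep.symm)
      (@Measurable.aemeasurable _ _ _ m₁ _ _ (measurable_id'' hm₁)) hB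
      (hh.indicator hA).aestronglyMeasurable
  rw [Set.inter_comm, ← setIntegral_indicator (hm₁ _ hA)]
  simpa only [id, integral_indicator (hm₁ _ hA)] using key

theorem condExp_sup_eq_of_indep {Ω E : Type*} [NormedAddCommGroup E] [NormedSpace ℝ E]
    [CompleteSpace E] {m₁ m₂ m₃ mΩ : MeasurableSpace Ω} {μ : Measure Ω} [IsFiniteMeasure μ]
    (hm₁ : m₁ ≤ mΩ) (hm₂ : m₂ ≤ mΩ) (hm₃ : m₃ ≤ m₁) (hindep : Indep m₁ m₂ μ) {f : Ω → E}
    (hf : Integrable f μ) (hfm : StronglyMeasurable[m₁] f) :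
    μ[f | m₃ ⊔ m₂] =ᵐ[μ] μ[f | m₃] := by
  have hm₃Ω : m₃ ≤ mΩ := hm₃.trans hm₁
  have hm₃₂ : m₃ ⊔ m₂ ≤ mΩ := sup_le hm₃Ω hm₂
  refine (ae_eq_condExp_of_forall_setIntegral_eq hm₃₂ hf
    (fun s _ _ ↦ integrable_condExp.integrableOn) (fun s hs _ ↦ ?_)
    (StronglyMeasurable.aestronglyMeasurable (μ := μ)
      (stronglyMeasurable_condExp.mono le_sup_left))).symm
  refine setIntegral_eq_of_isPiSystem hm₃₂
    (MeasurableSpace.sup_eq_generateFrom_image2_inter m₃ m₂)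
    ((@MeasurableSpace.isPiSystem_measurableSet _ m₃).image2_inter
      (@MeasurableSpace.isPiSystem_measurableSet _ m₂))
    integrable_condExp hf (integral_condExp hm₃Ω) ?_ hs
  rintro _ ⟨A, hA, B, hB, rfl⟩
  rw [setIntegral_inter_eq_smul_of_indep hm₁ hm₂ hindep (stronglyMeasurable_condExp.mono hm₃)
      (hm₃ _ hA) hB, setIntegral_inter_eq_smul_of_indep hm₁ hm₂ hindep hfm (hm₃ _ hA) hB,
    setIntegral_condExp hm₃Ω hf hA]

theorem condExp_condExp_iSup_eq_of_iIndep {Ω ι E : Type*} [NormedAddCommGroup E]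
    [NormedSpace ℝ E] [CompleteSpace E] {mΩ : MeasurableSpace Ω} {μ : Measure Ω}
    [IsFiniteMeasure μ] {m : ι → MeasurableSpace Ω} (hm : ∀ i, m i ≤ mΩ) (hindep : iIndep m μ)
    (f : Ω → E) (K₁ K₂ : Set ι) :
    μ[μ[f | ⨆ k ∈ K₁, m k] | ⨆ k ∈ K₂, m k] =ᵐ[μ] μ[f | ⨆ k ∈ K₁ ∩ K₂, m k] := by
  have hK₁ : ⨆ k ∈ K₁, m k ≤ mΩ := iSup₂_le fun k _ ↦ hm k
  have hK₁₂ : ⨆ k ∈ K₁ ∩ K₂, m k ≤ ⨆ k ∈ K₁, m k := biSup_mono fun _ ↦ And.left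
  have hsplit : ⨆ k ∈ K₂, m k = (⨆ k ∈ K₁ ∩ K₂, m k) ⊔ ⨆ k ∈ K₂ \ K₁, m k := by
    rw [← iSup_union, Set.inter_comm, Set.inter_union_sdiff]
  rw [hsplit]
  calc μ[μ[f | ⨆ k ∈ K₁, m k] | (⨆ k ∈ K₁ ∩ K₂, m k) ⊔ ⨆ k ∈ K₂ \ K₁, m k]
      =ᵐ[μ] μ[μ[f | ⨆ k ∈ K₁, m k] | ⨆ k ∈ K₁ ∩ K₂, m k] :=
        condExp_sup_eq_of_indep hK₁ (iSup₂_le fun k _ ↦ hm k) hK₁₂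
          (indep_iSup_of_disjoint hm hindep Set.disjoint_sdiff_right) integrable_condExp
          stronglyMeasurable_condExp
    _ =ᵐ[μ] μ[f | ⨆ k ∈ K₁ ∩ K₂, m k] := condExp_condExp_of_le hK₁₂ hK₁

theorem biSup_sup_biSup_eq_biSup_image_inl_union_image_inr {ι κ α : Type*} [CompleteLattice α]
    (m : ι ⊕ κ → α) (I : Set ι) (J : Set κ) :
    (⨆ i ∈ I, m (.inl i)) ⊔ ⨆ j ∈ J, m (.inr j) = ⨆ k ∈ Sum.inl '' I ∪ Sum.inr '' J, m k := by
  rw [iSup_union, iSup_image, iSup_image]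

theorem stmt1_general {Ω S : Type*} [mΩ : MeasurableSpace Ω] [MeasurableSpace S]
    {P : Measure Ω} [IsProbabilityMeasure P]
    (ξ ξ' : ℤ → Ω → S)
    (hmeas : ∀ i, Measurable (ξ i)) (hmeas' : ∀ i, Measurable (ξ' i))
    (hindep : iIndepFun (β := fun _ : ℤ ⊕ ℤ => S) (Sum.elim ξ ξ') P)
    (Y : Ω → ℝ)
    (I₁ I₂ J₁ J₂ : Set ℤ) :
    P[ P[Y | (⨆ i ∈ I₁, MeasurableSpace.comap (ξ i) inferInstance) ⊔ (⨆ j ∈ J₁, MeasurableSpace.comap (ξ' j) inferInstance)]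
      | (⨆ i ∈ I₂, MeasurableSpace.comap (ξ i) inferInstance) ⊔ (⨆ j ∈ J₂, MeasurableSpace.comap (ξ' j) inferInstance)]
    =ᵐ[P]
    P[Y | (⨆ i ∈ I₁ ∩ I₂, MeasurableSpace.comap (ξ i) inferInstance)
          ⊔ (⨆ j ∈ J₁ ∩ J₂, MeasurableSpace.comap (ξ' j) inferInstance)] := by
  set m : ℤ ⊕ ℤ → MeasurableSpace Ω :=
    fun k ↦ MeasurableSpace.comap (Sum.elim ξ ξ' k) inferInstance
  have hm : ∀ k, m k ≤ mΩ
    | .inl i => (hmeas i).comap_le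
    | .inr j => (hmeas' j).comap_le
  have hsum : ∀ I J : Set ℤ, (⨆ i ∈ I, MeasurableSpace.comap (ξ i) inferInstance) ⊔
      (⨆ j ∈ J, MeasurableSpace.comap (ξ' j) inferInstance) =
        ⨆ k ∈ Sum.inl '' I ∪ Sum.inr '' J, m k :=
    fun I J ↦ biSup_sup_biSup_eq_biSup_image_inl_union_image_inr m I J
  have hinter : Sum.inl '' (I₁ ∩ I₂) ∪ Sum.inr '' (J₁ ∩ J₂) =
      (Sum.inl '' I₁ ∪ Sum.inr '' J₁) ∩ (Sum.inl '' I₂ ∪ Sum.inr '' J₂) := by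
    ext (i | j) <;> simp
  rw [hsum, hsum, hsum, hinter]
  exact condExp_condExp_iSup_eq_of_iIndep hm hindep Y _ _

/-- For an independent sequence `(ξ_i)` with independent copy `(ξ'_i)` and
`ℱ_I = σ(ξ_i, i ∈ I)`, `ℱ'_J = σ(ξ'_j, j ∈ J)`, one has
`E[E[Y | ℱ_{I₁} ⊔ ℱ'_{J₁}] | ℱ_{I₂} ⊔ ℱ'_{J₂}] = E[Y | ℱ_{I₁∩I₂} ⊔ ℱ'_{J₁∩J₂}]` a.s. -/
theorem stmt1 {Ω S : Type*} [mΩ : MeasurableSpace Ω] [MeasurableSpace S]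
    {P : Measure Ω} [IsProbabilityMeasure P]
    (ξ ξ' : ℤ → Ω → S)
    (hmeas : ∀ i, Measurable (ξ i)) (hmeas' : ∀ i, Measurable (ξ' i))
    (hindep : iIndepFun (β := fun _ : ℤ ⊕ ℤ => S) (Sum.elim ξ ξ') P)
    (hcopy : IdentDistrib (fun ω (i : ℤ) => ξ i ω) (fun ω (i : ℤ) => ξ' i ω) P P)
    (Y : Ω → ℝ) (hY : Integrable Y P)
    (I₁ I₂ J₁ J₂ : Set ℤ) :
    P[ P[Y | (⨆ i ∈ I₁, MeasurableSpace.comap (ξ i) inferInstance) ⊔ (⨆ j ∈ J₁, MeasurableSpace.comap (ξ' j) inferInstance)]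
      | (⨆ i ∈ I₂, MeasurableSpace.comap (ξ i) inferInstance) ⊔ (⨆ j ∈ J₂, MeasurableSpace.comap (ξ' j) inferInstance)]
    =ᵐ[P]
    P[Y | (⨆ i ∈ I₁ ∩ I₂, MeasurableSpace.comap (ξ i) inferInstance)
          ⊔ (⨆ j ∈ J₁ ∩ J₂, MeasurableSpace.comap (ξ' j) inferInstance)] :=
  stmt1_general (mΩ := mΩ) ξ ξ' hmeas hmeas' hindep Y I₁ I₂ J₁ J₂
end

section
/- Hoeffding projections sum to the kernel: let (ξ_i) be i.i.d. random variables with values in S, h : S^m → B Bochner-integrable, and for I ⊆ {1,…,m} define h^I(ξ_I) = ∑_{J ⊆ I} (−1)^{|I|−|J|} E[h(ξ₁,…,ξ_m) | ξ_j, j ∈ J] (with E[·|ξ_∅] = E[·]). Then ∑_{I ⊆ {1,…,m}} h^I(ξ_I) = h(ξ₁,…,ξ_m) almost surely. -/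
/-!
The identity is Möbius inversion on the Boolean lattice of subsets of `{0,…,m-1}`: after
exchanging the two sums, `E[h | ξ_J]` carries the coefficient `∑_{I ⊇ J} (-1)^{|I|-|J|}`,
which vanishes unless `J` is the whole index set. What remains is
`E[h(ξ_0,…,ξ_{m-1}) | ξ_0,…,ξ_{m-1}] = h(ξ_0,…,ξ_{m-1})`.
-/

open MeasureTheory ProbabilityTheory Finset

namespace Finset

variable {α : Type*} [Fintype α] [DecidableEq α]

theorem sum_superset_neg_one_pow_card_sub {R : Type*} [Ring R] (J : Finset α) :
    ∑ I ∈ univ.filter (J ⊆ ·), (-1 : R) ^ (#I - #J) = if J = univ then 1 else 0 := by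
  have hshift : ∑ I ∈ univ.filter (J ⊆ ·), (-1 : R) ^ (#I - #J)
      = ∑ K ∈ Jᶜ.powerset, (-1 : R) ^ #K := by
    refine sum_nbij' (· \ J) (· ∪ J) ?_ ?_ ?_ ?_ ?_
    · intro I _
      simp [subset_iff]
    · intro K _
      simp
    · intro I hI
      exact sdiff_union_of_subset (mem_filter.1 hI).2
    · intro K hK
      rw [union_sdiff_right, sdiff_eq_self_of_disjoint (subset_compl_iff_disjoint_right.1
        (mem_powerset.1 hK))]
    · intro I hI
      rw [card_sdiff_of_subset (mem_filter.1 hI).2]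
  have hcompl := congrArg (Int.cast : ℤ → R) (sum_powerset_neg_one_pow_card (x := Jᶜ))
  push_cast at hcompl
  rw [hshift, hcompl]
  simp [compl_eq_empty_iff]

theorem sum_sum_powerset_neg_one_pow_smul {R M : Type*} [Ring R] [AddCommGroup M] [Module R M]
    (g : Finset α → M) :
    ∑ I : Finset α, ∑ J ∈ I.powerset, (-1 : R) ^ (#I - #J) • g J = g univ := by
  calc ∑ I : Finset α, ∑ J ∈ I.powerset, (-1 : R) ^ (#I - #J) • g J
      = ∑ J : Finset α, ∑ I ∈ univ.filter (J ⊆ ·), (-1 : R) ^ (#I - #J) • g J :=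
        sum_comm' fun I J => by simp
    _ = ∑ J : Finset α, (if J = univ then (1 : R) else 0) • g J := by
        simp only [← sum_smul, sum_superset_neg_one_pow_card_sub]
    _ = g univ := by simp [ite_smul]

end Finset

theorem MeasureTheory.condExp_iSup_comap_comp {ι Ω S B : Type*} [mΩ : MeasurableSpace Ω]
    [MeasurableSpace S] [NormedAddCommGroup B] [NormedSpace ℝ B] [CompleteSpace B]
    {P : Measure Ω} [IsFiniteMeasure P] {X : ι → Ω → S} (hX : ∀ i, Measurable (X i))
    {h : (ι → S) → B} (hh : StronglyMeasurable h)
    (hint : Integrable (fun ω => h (fun i => X i ω)) P) :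
    P[fun ω => h (fun i => X i ω) | ⨆ i, MeasurableSpace.comap (X i) inferInstance]
      = fun ω => h (fun i => X i ω) := by
  have hle : ⨆ i, MeasurableSpace.comap (X i) inferInstance ≤ mΩ :=
    iSup_le fun i => (hX i).comap_le
  have hXm : Measurable[⨆ i, MeasurableSpace.comap (X i) inferInstance] (fun ω i => X i ω) := by
    let _ : MeasurableSpace Ω := ⨆ i, MeasurableSpace.comap (X i) inferInstance
    exact measurable_pi_lambda _ fun i =>
      Measurable.of_comap_le (le_iSup (fun i => MeasurableSpace.comap (X i) inferInstance) i)
  exact condExp_of_stronglyMeasurable hle (hh.comp_measurable hXm) hint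

theorem stmt7_general {Ω S B : Type*} [mΩ : MeasurableSpace Ω] [MeasurableSpace S]
    [NormedAddCommGroup B] [NormedSpace ℝ B] [CompleteSpace B]
    {P : Measure Ω} [IsProbabilityMeasure P]
    (m : ℕ) (ξ : ℕ → Ω → S) (hmeas : ∀ i, Measurable (ξ i))
    (h : (Fin m → S) → B) (hmeas_h : StronglyMeasurable h)
    (hint : Integrable (fun ω => h (fun k => ξ k ω)) P) :
    ∀ᵐ ω ∂P,
      ∑ I : Finset (Fin m), ∑ J ∈ I.powerset,
        ((-1 : ℝ) ^ (I.card - J.card)) •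
          (P[(fun ω => h (fun k => ξ k ω))
              | ⨆ j ∈ J, MeasurableSpace.comap (ξ (j : ℕ)) inferInstance]) ω
      = h (fun k => ξ k ω) := by
  refine Filter.Eventually.of_forall fun ω => ?_
  rw [sum_sum_powerset_neg_one_pow_smul (α := Fin m)
    (fun J => P[(fun ω => h (fun k => ξ k ω))
      | ⨆ j ∈ J, MeasurableSpace.comap (ξ (j : ℕ)) inferInstance] ω)]
  simp only [mem_univ, iSup_pos]
  exact congrFun (condExp_iSup_comap_comp (X := fun k : Fin m => ξ k) (fun k => hmeas k)
    hmeas_h hint) ω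

/-- Hoeffding projections sum to the kernel: with
`h^I(ξ_I) = ∑_{J ⊆ I} (-1)^{|I|-|J|} E[h(ξ_0,…,ξ_{m-1}) | ξ_j, j ∈ J]`,
one has `∑_{I ⊆ {0,…,m-1}} h^I(ξ_I) = h(ξ_0,…,ξ_{m-1})` a.s. -/
theorem stmt7 {Ω S B : Type*} [mΩ : MeasurableSpace Ω] [MeasurableSpace S]
    [NormedAddCommGroup B] [NormedSpace ℝ B] [CompleteSpace B]
    {P : Measure Ω} [IsProbabilityMeasure P]
    (m : ℕ) (ξ : ℕ → Ω → S) (hmeas : ∀ i, Measurable (ξ i))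
    (hindep : iIndepFun ξ P)
    (hid : ∀ i, IdentDistrib (ξ i) (ξ 0) P P)
    (h : (Fin m → S) → B) (hmeas_h : StronglyMeasurable h)
    (hint : Integrable (fun ω => h (fun k => ξ k ω)) P) :
    ∀ᵐ ω ∂P,
      ∑ I : Finset (Fin m), ∑ J ∈ I.powerset,
        ((-1 : ℝ) ^ (I.card - J.card)) •
          (P[(fun ω => h (fun k => ξ k ω))
              | ⨆ j ∈ J, MeasurableSpace.comap (ξ (j : ℕ)) inferInstance]) ω
      = h (fun k => ξ k ω) :=
  stmt7_general (mΩ := mΩ) m ξ hmeas h hmeas_h hint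
end

section
/- Rosenthal-type inequality for sums of independent nonnegative random variables: for every s ≥ 1 there exists a constant K_s such that for any finite family (X_i)_{i∈I} of independent nonnegative random variables, E[ (∑_{i∈I} X_i)^s ] ≤ K_s (∑_{i∈I} E[X_i])^s + K_s ∑_{i∈I} E[X_i^s]. -/
/-!
Work with `fᵢ = ofReal ∘ Xᵢ` in `ℝ≥0∞`, where no integrability side conditions arise, and put
`S = ∑ fᵢ`, `M = E[S^s]`, `A = ∑ E[fᵢ]`, `B = ∑ E[fᵢ^s]`. Writing `S^s = ∑ fᵢ S^(s-1)` and
`S = fᵢ + Sᵢ` with `Sᵢ` independent of `fᵢ`, the bound `(a + b)^(s-1) ≤ 2^(s-1) (a^(s-1) + b^(s-1))`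
and independence give `M ≤ 2^(s-1) (B + A E[S^(s-1)])`, and Lyapunov's inequality
`E[S^(s-1)] ≤ M^((s-1)/s)` turns this into a self-bounding inequality for `M`.
When `M < ∞`, `M ≤ B' + A' M^((s-1)/s)` forces `M ≤ 2B'` or `M^(1/s) ≤ 2A'`.
-/

open MeasureTheory ProbabilityTheory
open scoped ENNReal

namespace ENNReal

lemma add_rpow_le_two_rpow_mul {p : ℝ} (hp : 0 ≤ p) (a b : ℝ≥0∞) :
    (a + b) ^ p ≤ 2 ^ p * (a ^ p + b ^ p) := by
  calc (a + b) ^ p ≤ (2 * max a b) ^ p := by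
        gcongr
        rw [two_mul]
        exact add_le_add (le_max_left a b) (le_max_right a b)
    _ = 2 ^ p * max a b ^ p := mul_rpow_of_nonneg _ _ hp
    _ ≤ 2 ^ p * (a ^ p + b ^ p) := by
        gcongr
        rcases le_total a b with h | h
        · rw [max_eq_right h]; exact le_add_self
        · rw [max_eq_left h]; exact le_self_add

lemma rpow_eq_mul_rpow_sub_one {s : ℝ} (hs : 1 ≤ s) (a : ℝ≥0∞) :
    a ^ s = a * a ^ (s - 1) := by
  conv_lhs => rw [← add_sub_cancel (1 : ℝ) s]
  rw [rpow_add_of_nonneg _ _ zero_le_one (by linarith), rpow_one]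

lemma le_of_le_add_mul_rpow {s : ℝ} (hs : 0 < s) {M A B : ℝ≥0∞} (hM : M ≠ ⊤)
    (h : M ≤ B + A * M ^ ((s - 1) / s)) : M ≤ 2 * B + (2 * A) ^ s := by
  rcases le_total (A * M ^ ((s - 1) / s)) B with hAB | hBA
  · calc M ≤ B + B := h.trans (by gcongr)
      _ = 2 * B := (two_mul B).symm
      _ ≤ 2 * B + (2 * A) ^ s := le_self_add
  rcases eq_or_ne M 0 with rfl | hM0
  · exact zero_le
  have hM2 : M ^ (1 / s) * M ^ ((s - 1) / s) ≤ 2 * A * M ^ ((s - 1) / s) := by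
    rw [← rpow_add _ _ hM0 hM, show 1 / s + (s - 1) / s = 1 by field_simp; ring, rpow_one,
      mul_assoc, two_mul]
    exact h.trans (by gcongr)
  have hroot : M ^ (1 / s) ≤ 2 * A :=
    (ENNReal.mul_le_mul_iff_left (rpow_pos (pos_iff_ne_zero.2 hM0) hM).ne'
      (rpow_ne_top_of_ne_zero hM0 hM)).1 hM2
  calc M = (M ^ (1 / s)) ^ s := by rw [← rpow_mul, one_div_mul_cancel hs.ne', rpow_one]
    _ ≤ (2 * A) ^ s := rpow_le_rpow hroot hs.le
    _ ≤ 2 * B + (2 * A) ^ s := le_add_self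

end ENNReal

lemma lintegral_rpow_le_lintegral_rpow_rpow_div {Ω : Type*} [MeasurableSpace Ω] {P : Measure Ω}
    [IsProbabilityMeasure P] {g : Ω → ℝ≥0∞} (hg : Measurable g) {p q : ℝ} (hp : 0 ≤ p)
    (hpq : p ≤ q) : ∫⁻ ω, g ω ^ p ∂P ≤ (∫⁻ ω, g ω ^ q ∂P) ^ (p / q) := by
  rcases hp.eq_or_lt with rfl | hp
  · simp
  have h := eLpNorm'_le_eLpNorm'_of_exponent_le hp hpq P hg.aestronglyMeasurable
  simp only [eLpNorm', enorm_eq_self] at h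
  have := ENNReal.rpow_le_rpow h hp.le
  rwa [← ENNReal.rpow_mul, one_div_mul_cancel hp.ne', ENNReal.rpow_one, ← ENNReal.rpow_mul,
    one_div_mul_eq_div] at this

section Rosenthal

variable {Ω : Type*} [MeasurableSpace Ω] {P : Measure Ω} {ι : Type*} [Fintype ι]
  {f : ι → Ω → ℝ≥0∞} {s : ℝ}

lemma lintegral_mul_sum_rpow_sub_one_le (hf : ∀ i, Measurable (f i)) (hind : iIndepFun f P)
    (hs : 1 ≤ s) (i : ι) :
    ∫⁻ ω, f i ω * (∑ j, f j ω) ^ (s - 1) ∂P ≤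
      2 ^ (s - 1) * (∫⁻ ω, f i ω ^ s ∂P
        + (∫⁻ ω, f i ω ∂P) * ∫⁻ ω, (∑ j, f j ω) ^ (s - 1) ∂P) := by
  classical
  have hs1 : 0 ≤ s - 1 := by linarith
  set g : Ω → ℝ≥0∞ := fun ω => ∑ j ∈ Finset.univ.erase i, f j ω
  have hgm : Measurable g := Finset.measurable_sum _ fun j _ => hf j
  have hsplit : ∀ ω, ∑ j, f j ω = f i ω + g ω := fun ω =>
    (Finset.add_sum_erase _ (fun j => f j ω) (Finset.mem_univ i)).symm
  have hindep : IndepFun (f i) (fun ω => g ω ^ (s - 1)) P := by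
    have h := hind.indepFun_finsetSum_of_notMem hf (Finset.notMem_erase i Finset.univ)
    rw [Finset.sum_fn] at h
    exact h.symm.comp measurable_id (measurable_id.pow_const _)
  have hpoint : ∀ ω, f i ω * (∑ j, f j ω) ^ (s - 1) ≤
      2 ^ (s - 1) * (f i ω ^ s + f i ω * g ω ^ (s - 1)) := fun ω => by
    calc f i ω * (∑ j, f j ω) ^ (s - 1)
        ≤ f i ω * (2 ^ (s - 1) * (f i ω ^ (s - 1) + g ω ^ (s - 1))) := by
          rw [hsplit]; gcongr; exact ENNReal.add_rpow_le_two_rpow_mul hs1 _ _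
      _ = 2 ^ (s - 1) * (f i ω ^ s + f i ω * g ω ^ (s - 1)) := by
          rw [ENNReal.rpow_eq_mul_rpow_sub_one hs]; ring
  calc ∫⁻ ω, f i ω * (∑ j, f j ω) ^ (s - 1) ∂P
      ≤ ∫⁻ ω, 2 ^ (s - 1) * (f i ω ^ s + f i ω * g ω ^ (s - 1)) ∂P := lintegral_mono hpoint
    _ = 2 ^ (s - 1) * (∫⁻ ω, f i ω ^ s ∂P + (∫⁻ ω, f i ω ∂P) * ∫⁻ ω, g ω ^ (s - 1) ∂P) := by
        rw [lintegral_const_mul' _ _ (by simp), lintegral_add_left ((hf i).pow_const s),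
          lintegral_mul_eq_lintegral_mul_lintegral_of_indepFun'' (hf i).aemeasurable
            (hgm.pow_const _).aemeasurable hindep]
    _ ≤ _ := by
        gcongr with ω
        rw [hsplit]
        exact le_add_self

lemma lintegral_sum_rpow_le_add_mul_rpow [IsProbabilityMeasure P] (hf : ∀ i, Measurable (f i))
    (hind : iIndepFun f P) (hs : 1 ≤ s) :
    ∫⁻ ω, (∑ i, f i ω) ^ s ∂P ≤
      2 ^ (s - 1) * ∑ i, ∫⁻ ω, f i ω ^ s ∂P
        + 2 ^ (s - 1) * (∑ i, ∫⁻ ω, f i ω ∂P) * (∫⁻ ω, (∑ i, f i ω) ^ s ∂P) ^ ((s - 1) / s) := by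
  have hSm : Measurable fun ω => ∑ i, f i ω := Finset.measurable_sum _ fun i _ => hf i
  calc ∫⁻ ω, (∑ i, f i ω) ^ s ∂P = ∑ i, ∫⁻ ω, f i ω * (∑ j, f j ω) ^ (s - 1) ∂P := by
        refine (lintegral_congr fun ω => ?_).trans
          (lintegral_finsetSum _ fun i _ => (hf i).mul (hSm.pow_const _))
        rw [ENNReal.rpow_eq_mul_rpow_sub_one hs, Finset.sum_mul]
    _ ≤ ∑ i, 2 ^ (s - 1) * (∫⁻ ω, f i ω ^ s ∂P
          + (∫⁻ ω, f i ω ∂P) * ∫⁻ ω, (∑ j, f j ω) ^ (s - 1) ∂P) :=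
        Finset.sum_le_sum fun i _ => lintegral_mul_sum_rpow_sub_one_le hf hind hs i
    _ ≤ _ := by
        rw [← Finset.mul_sum, Finset.sum_add_distrib, ← Finset.sum_mul, mul_add, mul_assoc]
        gcongr
        exact lintegral_rpow_le_lintegral_rpow_rpow_div hSm (by linarith) (by linarith)

lemma lintegral_sum_rpow_ne_top (hf : ∀ i, Measurable (f i)) (hs : 1 ≤ s)
    (hfin : ∑ i, ∫⁻ ω, f i ω ^ s ∂P ≠ ⊤) : ∫⁻ ω, (∑ i, f i ω) ^ s ∂P ≠ ⊤ := by
  have hcard : (Fintype.card ι : ℝ≥0∞) ^ (s - 1) ≠ ⊤ :=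
    ENNReal.rpow_ne_top_of_nonneg (by linarith) (ENNReal.natCast_ne_top _)
  refine ne_top_of_le_ne_top (ENNReal.mul_ne_top hcard hfin) ?_
  calc ∫⁻ ω, (∑ i, f i ω) ^ s ∂P
      ≤ ∫⁻ ω, (Fintype.card ι : ℝ≥0∞) ^ (s - 1) * ∑ i, f i ω ^ s ∂P :=
        lintegral_mono fun ω => ENNReal.rpow_sum_le_const_mul_sum_rpow Finset.univ _ hs
    _ = (Fintype.card ι : ℝ≥0∞) ^ (s - 1) * ∑ i, ∫⁻ ω, f i ω ^ s ∂P := by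
        rw [lintegral_const_mul' _ _ hcard,
          lintegral_finsetSum _ fun i _ => (hf i).pow_const s]

theorem lintegral_sum_rpow_le [IsProbabilityMeasure P] (hf : ∀ i, Measurable (f i))
    (hind : iIndepFun f P) (hs : 1 ≤ s) :
    ∫⁻ ω, (∑ i, f i ω) ^ s ∂P ≤
      2 ^ (s * s) * (∑ i, ∫⁻ ω, f i ω ∂P) ^ s + 2 ^ (s * s) * ∑ i, ∫⁻ ω, f i ω ^ s ∂P := by
  by_cases hfin : ∑ i, ∫⁻ ω, f i ω ^ s ∂P = ⊤
  · simp [hfin, ENNReal.mul_top]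
  have h := ENNReal.le_of_le_add_mul_rpow (by linarith) (lintegral_sum_rpow_ne_top hf hs hfin)
    (lintegral_sum_rpow_le_add_mul_rpow hf hind hs)
  rw [← mul_assoc, ← mul_assoc, ← ENNReal.rpow_eq_mul_rpow_sub_one hs,
    ENNReal.mul_rpow_of_nonneg _ _ (by linarith), ← ENNReal.rpow_mul, add_comm] at h
  refine h.trans (add_le_add le_rfl ?_)
  gcongr
  · norm_num
  · nlinarith

end Rosenthal

section OfReal

variable {Ω : Type*} [MeasurableSpace Ω] {P : Measure Ω} {Y : Ω → ℝ} {p : ℝ}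

lemma integral_rpow_eq_toReal_lintegral_ofReal_rpow (hY : Measurable Y) (hY0 : ∀ ω, 0 ≤ Y ω)
    (hp : 0 ≤ p) : ∫ ω, Y ω ^ p ∂P = (∫⁻ ω, ENNReal.ofReal (Y ω) ^ p ∂P).toReal := by
  rw [integral_eq_lintegral_of_nonneg_ae (ae_of_all _ fun ω => Real.rpow_nonneg (hY0 ω) p)
    (hY.pow_const p).aestronglyMeasurable]
  simp_rw [ENNReal.ofReal_rpow_of_nonneg (hY0 _) hp]

lemma lintegral_ofReal_rpow_ne_top (hY0 : ∀ ω, 0 ≤ Y ω) (hp : 0 ≤ p)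
    (hint : Integrable (fun ω => Y ω ^ p) P) : ∫⁻ ω, ENNReal.ofReal (Y ω) ^ p ∂P ≠ ⊤ := by
  simpa [ENNReal.ofReal_rpow_of_nonneg (hY0 _) hp] using hint.lintegral_lt_top.ne

lemma lintegral_ofReal_ne_top_of_integrable_rpow [IsProbabilityMeasure P] (hY : Measurable Y)
    (hY0 : ∀ ω, 0 ≤ Y ω) (hp : 1 ≤ p) (hint : Integrable (fun ω => Y ω ^ p) P) :
    ∫⁻ ω, ENNReal.ofReal (Y ω) ∂P ≠ ⊤ := by
  have h := lintegral_rpow_le_lintegral_rpow_rpow_div (P := P) hY.ennreal_ofReal zero_le_one hp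
  rw [funext fun ω => ENNReal.rpow_one (ENNReal.ofReal (Y ω))] at h
  exact ne_top_of_le_ne_top (ENNReal.rpow_ne_top_of_nonneg (by positivity)
    (lintegral_ofReal_rpow_ne_top hY0 (by linarith) hint)) h

end OfReal

/-- Rosenthal-type inequality for sums of independent nonnegative random variables:
for every `s ≥ 1` there is `K_s` such that for any finite family of independent
nonnegative random variables,
`E[(∑ᵢ Xᵢ)^s] ≤ K_s (∑ᵢ E[Xᵢ])^s + K_s ∑ᵢ E[Xᵢ^s]`. -/
theorem stmt13 (s : ℝ) (hs : 1 ≤ s) :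
    ∃ K : ℝ, ∀ {Ω : Type} [MeasurableSpace Ω] (P : Measure Ω), IsProbabilityMeasure P →
      ∀ {ι : Type} [Fintype ι] (X : ι → Ω → ℝ),
        (∀ i, Measurable (X i)) → (∀ i ω, 0 ≤ X i ω) →
        iIndepFun X P →
        (∀ i, Integrable (fun ω => X i ω ^ s) P) →
        ∫ ω, (∑ i, X i ω) ^ s ∂P
          ≤ K * (∑ i, ∫ ω, X i ω ∂P) ^ s + K * ∑ i, ∫ ω, X i ω ^ s ∂P := by
  refine ⟨2 ^ (s * s), fun {Ω} _ P _ ι _ X hXm hX0 hXind hXint => ?_⟩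
  set f : ι → Ω → ℝ≥0∞ := fun i ω => ENNReal.ofReal (X i ω)
  have hpow : ∀ i, ∫⁻ ω, f i ω ^ s ∂P ≠ ⊤ := fun i =>
    lintegral_ofReal_rpow_ne_top (hX0 i) (by linarith) (hXint i)
  have hfirst : ∀ i, ∫⁻ ω, f i ω ∂P ≠ ⊤ := fun i =>
    lintegral_ofReal_ne_top_of_integrable_rpow (hXm i) (hX0 i) hs (hXint i)
  have hbound := lintegral_sum_rpow_le (fun i => (hXm i).ennreal_ofReal)
    (hXind.comp (fun _ => ENNReal.ofReal) fun _ => ENNReal.measurable_ofReal) hs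
  have hK : (2 : ℝ≥0∞) ^ (s * s) ≠ ⊤ := ENNReal.rpow_ne_top_of_nonneg (by positivity) (by simp)
  have hA : (∑ i, ∫⁻ ω, f i ω ∂P) ^ s ≠ ⊤ :=
    ENNReal.rpow_ne_top_of_nonneg (by linarith) (ENNReal.sum_ne_top.2 fun i _ => hfirst i)
  have hB : ∑ i, ∫⁻ ω, f i ω ^ s ∂P ≠ ⊤ := ENNReal.sum_ne_top.2 fun i _ => hpow i
  convert ENNReal.toReal_mono
    (ENNReal.add_ne_top.2 ⟨ENNReal.mul_ne_top hK hA, ENNReal.mul_ne_top hK hB⟩) hbound using 1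
  · rw [integral_rpow_eq_toReal_lintegral_ofReal_rpow (Finset.measurable_sum _ fun i _ => hXm i)
      (fun ω => Finset.sum_nonneg fun i _ => hX0 i ω) (by linarith)]
    simp_rw [ENNReal.ofReal_sum_of_nonneg fun i _ => hX0 i _]
  · have h1 : ∀ i, ∫ ω, X i ω ∂P = (∫⁻ ω, f i ω ∂P).toReal := fun i =>
      integral_eq_lintegral_of_nonneg_ae (ae_of_all _ (hX0 i)) (hXm i).aestronglyMeasurable
    have h2 : ∀ i, ∫ ω, X i ω ^ s ∂P = (∫⁻ ω, f i ω ^ s ∂P).toReal := fun i =>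
      integral_rpow_eq_toReal_lintegral_ofReal_rpow (hXm i) (hX0 i) (by linarith)
    simp [h1, h2, ENNReal.toReal_add (ENNReal.mul_ne_top hK hA) (ENNReal.mul_ne_top hK hB),
      ENNReal.toReal_sum, hfirst, hpow, ← ENNReal.toReal_rpow]
end
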